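/- arXiv:2105.06553 — 2 statements merged into one kernel-verified Lean document; each statement's English description precedes it below -/
import Mathlib

section
/- Let k ≥ 4 be even, N > k, 0 ≤ m ≤ N, s ≥ 1, r = min(N-k-1, k/2), and A = C(k,2) - kr/2 + r(r-1)/2. The Type I generalized circulant graph C_{N,k,m,s}, obtained from C_{N,k} by attaching s pendant vertices to each of m distinct vertices of C_{N,k}, has clustering coefficient equal to (2A/(N+ms))·((N-m)/(k(k-1)) + m/((k+s)(k+s-1))). -/
open scoped Classical

/-- Circular distance between two elements of `ZMod N`. -/
def circDist {N : ℕ} (i j : ZMod N) : ℕ := min (i - j).val (j - i).val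

/-- The circulant graph `C_{N,k}`: vertices `ZMod N`, `i ~ j` iff the circular
distance between `i` and `j` lies in `{1, ..., k/2}`. -/
def circulant (N k : ℕ) : SimpleGraph (ZMod N) where
  Adj i j := 1 ≤ circDist i j ∧ circDist i j ≤ k / 2
  symm := by constructor; intro i j h; simpa [circDist, min_comm] using h
  loopless := by constructor; intro i h; simp [circDist] at h

/-- Number of edges among the neighbors of `v`. -/
noncomputable def nbrEdges {V : Type*} [Fintype V] (G : SimpleGraph V) (v : V) : ℕ :=
  (Finset.univ.filter fun p : V × V => G.Adj v p.1 ∧ G.Adj v p.2 ∧ G.Adj p.1 p.2).card / 2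

/-- Local clustering coefficient of a vertex. -/
noncomputable def localClustering {V : Type*} [Fintype V] (G : SimpleGraph V) (v : V) : ℚ :=
  (nbrEdges G v : ℚ) / ((G.degree v).choose 2 : ℚ)

/-- (Average) clustering coefficient of a graph. -/
noncomputable def clusteringCoeff {V : Type*} [Fintype V] (G : SimpleGraph V) : ℚ :=
  (∑ v, localClustering G v) / (Fintype.card V : ℚ)

/-- Type I generalized circulant graph `C_{N,k,m,s}`: attach `s` pendant vertices to
each of the first `m` vertices of the circulant graph `C_{N,k}`. -/
def typeI (N k m s : ℕ) : SimpleGraph (ZMod N ⊕ Fin m × Fin s) where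
  Adj a b :=
    (∃ i j : ZMod N, a = Sum.inl i ∧ b = Sum.inl j ∧ (circulant N k).Adj i j) ∨
    (∃ (p : Fin m) (q : Fin s),
      (a = Sum.inl ((p : ℕ) : ZMod N) ∧ b = Sum.inr (p, q)) ∨
      (b = Sum.inl ((p : ℕ) : ZMod N) ∧ a = Sum.inr (p, q)))
  symm := by
    constructor
    rintro a b (⟨i, j, rfl, rfl, h⟩ | ⟨p, q, h⟩)
    · exact Or.inl ⟨j, i, rfl, rfl, h.symm⟩
    · exact Or.inr ⟨p, q, h.symm⟩
  loopless := by
    constructor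
    rintro a (⟨i, j, rfl, h2, h⟩ | ⟨p, q, ⟨h1, h2⟩ | ⟨h1, h2⟩⟩)
    · cases h2; exact (circulant N k).loopless.irrefl _ h
    · subst h1; simp at h2
    · subst h1; simp at h2

open Finset

section Basics

variable {N : ℕ} [NeZero N]

lemma circDist_int (a b : ℤ) (h1 : 0 < a - b) (h2 : a - b < N) :
    circDist ((a : ZMod N)) ((b : ZMod N)) = min (a - b).toNat (N - (a - b).toNat) := by
  have key1 : ((((a : ZMod N) - b)).val : ℤ) = a - b := by
    have h : ((a : ZMod N) - b) = ((a - b : ℤ) : ZMod N) := by push_cast; ring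
    rw [h, ZMod.val_intCast, Int.emod_eq_of_lt (le_of_lt h1) h2]
  have key2 : ((((b : ZMod N) - a)).val : ℤ) = N - (a - b) := by
    have h : ((b : ZMod N) - a) = ((b - a : ℤ) : ZMod N) := by push_cast; ring
    have h3 : (b - a) % (N : ℤ) = (b - a + N) % N := (Int.add_mul_emod_self_left (b - a) (N : ℤ) 1 ▸ by ring_nf)
    rw [h, ZMod.val_intCast, h3, Int.emod_eq_of_lt (by omega) (by omega)]
    ring
  unfold circDist
  omega

omit [NeZero N] in
lemma intCast_zmod_inj {a b : ℤ} (h : (a - b).natAbs < N) (hc : (a : ZMod N) = b) : a = b := by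
  have h0 : ((a - b : ℤ) : ZMod N) = 0 := by push_cast [hc]; ring
  rw [ZMod.intCast_zmod_eq_zero_iff_dvd] at h0
  have habs : |a - b| = ((a - b).natAbs : ℤ) := Int.abs_eq_natAbs _
  have := Int.eq_zero_of_abs_lt_dvd h0 (by rw [habs]; exact_mod_cast h)
  omega

lemma circulant_adj_int (k : ℕ) {t t' : ℤ} (hd : (t - t').natAbs < N) :
    (circulant N k).Adj ((t : ZMod N)) ((t' : ZMod N)) ↔
      t ≠ t' ∧ ((t - t').natAbs ≤ k / 2 ∨ N ≤ (t - t').natAbs + k / 2) := by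
  have base : ∀ u u' : ℤ, u' < u → u - u' < N →
      ((circulant N k).Adj ((u : ZMod N)) ((u' : ZMod N)) ↔
        u ≠ u' ∧ ((u - u').natAbs ≤ k / 2 ∨ N ≤ (u - u').natAbs + k / 2)) := by
    intro u u' hlt habs
    have hd1 : 0 < u - u' := by omega
    have : (circulant N k).Adj ((u : ZMod N)) ((u' : ZMod N)) ↔
        1 ≤ circDist ((u : ZMod N)) ((u' : ZMod N)) ∧
          circDist ((u : ZMod N)) ((u' : ZMod N)) ≤ k / 2 := Iff.rfl
    rw [this, circDist_int u u' hd1 habs]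
    omega
  rcases lt_trichotomy t t' with h | h | h
  · have h2 : t' - t < N := by omega
    constructor
    · intro hadj
      have := (base t' t h h2).1 hadj.symm
      omega
    · intro hc
      exact ((base t' t h h2).2 (by omega)).symm
  · subst h
    simp only [ne_eq, not_true_eq_false, false_and, iff_false]
    intro hadj
    exact (circulant N k).loopless.irrefl _ hadj
  · exact base t t' h (by omega)

end Basics

section Zero

variable {N k : ℕ} [NeZero N]

/-- integer representatives of neighbors of 0 -/
noncomputable def repT (k : ℕ) : Finset ℤ := (Finset.Icc (-(k/2 : ℕ) : ℤ) ((k/2 : ℕ) : ℤ)).erase 0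

lemma mem_repT {t : ℤ} : t ∈ repT k ↔ t ≠ 0 ∧ t.natAbs ≤ k / 2 := by
  simp only [repT, mem_erase, mem_Icc]
  omega

lemma card_repT : (repT k).card = 2 * (k / 2) := by
  rw [repT, card_erase_of_mem (by simp only [mem_Icc]; omega), Int.card_Icc]
  omega

lemma adj_zero_cast (hN : 2 * (k/2) < N) {t : ℤ} (ht : t ∈ repT k) :
    (circulant N k).Adj 0 ((t : ZMod N)) := by
  rw [mem_repT] at ht
  have h0 : (0 : ZMod N) = ((0 : ℤ) : ZMod N) := by norm_cast
  rw [h0]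
  exact (circulant_adj_int k (by omega)).2 (by omega)

lemma adj_zero_exists (hN : 2 * (k/2) < N) {x : ZMod N} (hadj : (circulant N k).Adj 0 x) :
    ∃ t ∈ repT k, (t : ZMod N) = x := by
  have hx : x = ((x.val : ℤ) : ZMod N) := by
    push_cast
    exact (ZMod.natCast_rightInverse x).symm
  have hvlt : x.val < N := ZMod.val_lt x
  have h0 : (0 : ZMod N) = ((0 : ℤ) : ZMod N) := by norm_cast
  rw [h0, hx] at hadj
  have := (circulant_adj_int k (by omega)).1 hadj
  obtain ⟨hne, hc | hc⟩ := this
  · exact ⟨(x.val : ℤ), mem_repT.2 (by omega), hx.symm⟩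
  · refine ⟨(x.val : ℤ) - N, mem_repT.2 (by omega), ?_⟩
    have hcst : (((x.val : ℤ) - N : ℤ) : ZMod N)
        = ((x.val : ℕ) : ZMod N) - ((N : ℕ) : ZMod N) := by push_cast; ring
    rw [hcst, ZMod.natCast_self, sub_zero]
    exact ZMod.natCast_rightInverse x

lemma circDist_add (i j w : ZMod N) : circDist (i + w) (j + w) = circDist i j := by
  have h1 : i + w - (j + w) = i - j := by ring
  have h2 : j + w - (i + w) = j - i := by ring
  unfold circDist
  rw [h1, h2]

lemma circ_adj_add {i j : ZMod N} (w : ZMod N) :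
    (circulant N k).Adj (i + w) (j + w) ↔ (circulant N k).Adj i j := by
  show (1 ≤ circDist (i+w) (j+w) ∧ _) ↔ _
  rw [circDist_add]
  exact Iff.rfl

lemma filter_adj_eq_image (v : ZMod N) :
    (Finset.univ.filter fun x : ZMod N => (circulant N k).Adj v x)
      = (Finset.univ.filter fun x : ZMod N => (circulant N k).Adj 0 x).image (· + v) := by
  ext x
  simp only [mem_filter, mem_univ, true_and, mem_image]
  constructor
  · intro hadj
    refine ⟨x - v, ?_, by show x - v + v = x; ring⟩
    have h2 : (circulant N k).Adj (0 + v) (x - v + v) ↔ (circulant N k).Adj 0 (x - v) :=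
      circ_adj_add v
    have h3 : (0 : ZMod N) + v = v := by ring
    have h4 : x - v + v = x := by ring
    rw [h3, h4] at h2
    exact h2.1 hadj
  · rintro ⟨y, hy, rfl⟩
    show (circulant N k).Adj v (y + v)
    have h2 : (circulant N k).Adj (0 + v) (y + v) ↔ (circulant N k).Adj 0 y :=
      circ_adj_add v
    have h3 : (0 : ZMod N) + v = v := by ring
    rw [h3] at h2
    exact h2.2 hy

lemma circ_degree (hN : 2 * (k/2) < N) (v : ZMod N) :
    (circulant N k).degree v = 2 * (k / 2) := by
  classical
  have hdeg : (circulant N k).degree v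
      = ((Finset.univ.filter fun x : ZMod N => (circulant N k).Adj v x)).card := by
    unfold SimpleGraph.degree
    congr 1
    ext x
    simp [SimpleGraph.mem_neighborFinset]
  rw [hdeg, filter_adj_eq_image,
    Finset.card_image_of_injective _ (add_left_injective v)]
  have himg : (Finset.univ.filter fun x : ZMod N => (circulant N k).Adj 0 x)
      = (repT k).image (fun t : ℤ => (t : ZMod N)) := by
    ext x
    simp only [mem_filter, mem_univ, true_and, mem_image]
    constructor
    · intro hadj
      obtain ⟨t, ht, hcast⟩ := adj_zero_exists hN hadj
      exact ⟨t, ht, hcast⟩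
    · rintro ⟨t, ht, rfl⟩
      exact adj_zero_cast hN ht
  rw [himg, Finset.card_image_of_injOn, card_repT]
  intro a ha b hb hab
  rw [Finset.mem_coe, mem_repT] at ha hb
  exact intCast_zmod_inj (by omega) hab

end Zero

section Pairs

variable {N k : ℕ} [NeZero N]

/-- integer model of the set of ordered pairs of adjacent neighbors of 0 -/
noncomputable def pairsQ (N k : ℕ) : Finset (ℤ × ℤ) :=
  (repT k ×ˢ repT k).filter fun p =>
    p.1 ≠ p.2 ∧ ((p.1 - p.2).natAbs ≤ k / 2 ∨ N ≤ (p.1 - p.2).natAbs + k / 2)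

lemma adj_iff_sub (v x y : ZMod N) :
    (circulant N k).Adj x y ↔ (circulant N k).Adj (x - v) (y - v) := by
  have h := circ_adj_add (k := k) (i := x - v) (j := y - v) v
  have e1 : x - v + v = x := by ring
  have e2 : y - v + v = y := by ring
  rw [e1, e2] at h
  exact h

lemma filter_pairs_eq_image (v : ZMod N) :
    (Finset.univ.filter fun p : ZMod N × ZMod N =>
        (circulant N k).Adj v p.1 ∧ (circulant N k).Adj v p.2 ∧ (circulant N k).Adj p.1 p.2)
      = (Finset.univ.filter fun p : ZMod N × ZMod N =>
          (circulant N k).Adj 0 p.1 ∧ (circulant N k).Adj 0 p.2 ∧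
            (circulant N k).Adj p.1 p.2).image (fun p => (p.1 + v, p.2 + v)) := by
  ext ⟨x, y⟩
  simp only [mem_filter, mem_univ, true_and, mem_image, Prod.exists, Prod.mk.injEq]
  constructor
  · rintro ⟨h1, h2, h3⟩
    have h1' := (adj_iff_sub v v x).1 h1
    have h2' := (adj_iff_sub v v y).1 h2
    have h3' := (adj_iff_sub v x y).1 h3
    rw [sub_self] at h1' h2'
    exact ⟨x - v, y - v, ⟨h1', h2', h3'⟩, by ring, by ring⟩
  · rintro ⟨a, b, ⟨h1, h2, h3⟩, rfl, rfl⟩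
    have h1' := (circ_adj_add (k := k) (i := (0 : ZMod N)) (j := a) v).2 h1
    have h2' := (circ_adj_add (k := k) (i := (0 : ZMod N)) (j := b) v).2 h2
    have h3' := (circ_adj_add (k := k) (i := a) (j := b) v).2 h3
    rw [zero_add] at h1' h2'
    exact ⟨h1', h2', h3'⟩

lemma filter_pairs_zero_eq (hN : 2 * (k / 2) < N) :
    (Finset.univ.filter fun p : ZMod N × ZMod N =>
        (circulant N k).Adj 0 p.1 ∧ (circulant N k).Adj 0 p.2 ∧ (circulant N k).Adj p.1 p.2)
      = (pairsQ N k).image (fun p : ℤ × ℤ => ((p.1 : ZMod N), (p.2 : ZMod N))) := by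
  ext ⟨x, y⟩
  simp only [mem_filter, mem_univ, true_and, mem_image, Prod.exists, Prod.mk.injEq, pairsQ,
    Finset.mem_product]
  constructor
  · rintro ⟨h1, h2, h3⟩
    obtain ⟨t1, ht1, rfl⟩ := adj_zero_exists hN h1
    obtain ⟨t2, ht2, rfl⟩ := adj_zero_exists hN h2
    have hb1 := mem_repT.1 ht1
    have hb2 := mem_repT.1 ht2
    have h3' := (circulant_adj_int k (t := t1) (t' := t2) (by omega)).1 h3
    exact ⟨t1, t2, ⟨⟨ht1, ht2⟩, h3'⟩, rfl, rfl⟩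
  · rintro ⟨t1, t2, ⟨⟨ht1, ht2⟩, hcond⟩, rfl, rfl⟩
    have hb1 := mem_repT.1 ht1
    have hb2 := mem_repT.1 ht2
    exact ⟨adj_zero_cast hN ht1, adj_zero_cast hN ht2,
      (circulant_adj_int k (t := t1) (t' := t2) (by omega)).2 hcond⟩

lemma circ_pairs_card (hN : 2 * (k / 2) < N) (v : ZMod N) :
    (Finset.univ.filter fun p : ZMod N × ZMod N =>
        (circulant N k).Adj v p.1 ∧ (circulant N k).Adj v p.2 ∧
          (circulant N k).Adj p.1 p.2).card = (pairsQ N k).card := by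
  have hinj : Function.Injective (fun p : ZMod N × ZMod N => (p.1 + v, p.2 + v)) := by
    intro p q h
    simp only [Prod.mk.injEq] at h
    have := add_right_cancel h.1
    have := add_right_cancel h.2
    ext <;> assumption
  rw [filter_pairs_eq_image v, Finset.card_image_of_injective _ hinj,
    filter_pairs_zero_eq hN, Finset.card_image_of_injOn]
  intro p hp q hq hpq
  simp only [Finset.mem_coe, pairsQ, mem_filter, Finset.mem_product] at hp hq
  have hb1 := mem_repT.1 hp.1.1
  have hb2 := mem_repT.1 hp.1.2
  have hb3 := mem_repT.1 hq.1.1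
  have hb4 := mem_repT.1 hq.1.2
  simp only [Prod.mk.injEq] at hpq
  have e1 := intCast_zmod_inj (N := N) (a := p.1) (b := q.1) (by omega) hpq.1
  have e2 := intCast_zmod_inj (N := N) (a := p.2) (b := q.2) (by omega) hpq.2
  ext <;> assumption

lemma circ_nbrEdges (hN : 2 * (k / 2) < N) (v : ZMod N) :
    nbrEdges (circulant N k) v = (pairsQ N k).card / 2 := by
  unfold nbrEdges
  rw [circ_pairs_card hN v]

end Pairs

section Count

/-- triangular numbers -/
def tri : ℕ → ℕ
  | 0 => 0
  | n + 1 => tri n + (n + 1)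

lemma tri_cast (n : ℕ) : (tri n : ℚ) = n * (n + 1) / 2 := by
  induction n with
  | zero => simp [tri]
  | succ n ih =>
    show ((tri n + (n+1) : ℕ) : ℚ) = _
    push_cast [ih]
    ring

lemma sum_tri (h e : ℕ) (he : e ≤ h) : ∑ a ∈ Finset.Icc 1 h, (e + a - h) = tri e := by
  induction h generalizing e with
  | zero =>
    interval_cases e
    simp [tri]
  | succ h ih =>
    rw [Finset.sum_Icc_succ_top (by omega)]
    rcases Nat.eq_zero_or_pos e with he0 | he1
    · subst he0
      rw [Finset.sum_eq_zero (fun a ha => by simp only [Finset.mem_Icc] at ha; omega)]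
      simp [tri]
    · obtain ⟨e', rfl⟩ : ∃ e', e = e' + 1 := ⟨e - 1, by omega⟩
      have hstep : ∀ a ∈ Finset.Icc 1 h, (e' + 1 + a - (h + 1)) = (e' + a - h) :=
        fun a ha => by omega
      rw [Finset.sum_congr rfl hstep, ih e' (by omega)]
      show tri e' + (e' + 1 + (h+1) - (h+1)) = tri (e' + 1)
      have : e' + 1 + (h+1) - (h+1) = e' + 1 := by omega
      rw [this]
      rfl

lemma Icc_int_eq_image (h : ℕ) :
    Finset.Icc (1 : ℤ) (h : ℤ) = (Finset.Icc 1 h).image (Nat.cast : ℕ → ℤ) := by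
  ext x
  simp only [Finset.mem_Icc, Finset.mem_image]
  constructor
  · intro hx
    exact ⟨x.toNat, by omega, by omega⟩
  · rintro ⟨n, hn, rfl⟩
    omega

lemma card_shift (h c : ℕ) (hc : h + 1 ≤ c) :
    ((Finset.Icc (1:ℤ) (h:ℤ) ×ˢ Finset.Icc (1:ℤ) (h:ℤ)).filter
        fun p => (c : ℤ) ≤ p.1 + p.2).card = tri (2 * h + 1 - c) := by
  classical
  rw [Finset.card_filter, Finset.sum_product]
  have inner : ∀ a : ℤ, a ∈ Finset.Icc (1:ℤ) (h:ℤ) →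
      (∑ b ∈ Finset.Icc (1:ℤ) (h:ℤ), if (c : ℤ) ≤ a + b then 1 else 0)
        = ((h : ℤ) + 1 - c + a).toNat := by
    intro a ha
    simp only [Finset.mem_Icc] at ha
    rw [← Finset.card_filter]
    have : (Finset.Icc (1:ℤ) (h:ℤ)).filter (fun b => (c:ℤ) ≤ a + b)
        = Finset.Icc ((c : ℤ) - a) (h : ℤ) := by
      ext b
      simp only [Finset.mem_filter, Finset.mem_Icc]
      omega
    rw [this, Int.card_Icc]
    congr 1
    ring
  rw [Finset.sum_congr rfl inner, Icc_int_eq_image, Finset.sum_image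
    (by intro a _ b _ hab; exact_mod_cast hab)]
  have hterm : ∀ a ∈ Finset.Icc 1 h,
      ((h : ℤ) + 1 - c + (a : ℤ)).toNat = ((2*h + 1 - c) + a - h : ℕ) := by
    intro a ha
    simp only [Finset.mem_Icc] at ha
    omega
  rw [Finset.sum_congr rfl hterm]
  exact sum_tri h (2*h + 1 - c) (by omega)

end Count


section QCard

lemma pairsQ_card {N k : ℕ} (hk : 4 ≤ k) (hN : 2 * (k / 2) < N) :
    (pairsQ N k).card + 2 * tri (k / 2)
      = 2 * ((k / 2) * (2 * (k / 2) - 1)) + 2 * tri (3 * (k / 2) + 1 - N) := by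
  classical
  obtain ⟨h, hh⟩ : ∃ h, k / 2 = h := ⟨k / 2, rfl⟩
  have hh2 : 2 ≤ h := by omega
  rw [hh]
  have hcT : (repT k).card = 2 * h := by rw [card_repT, hh]
  have memT : ∀ t : ℤ, t ∈ repT k ↔ t ≠ 0 ∧ t.natAbs ≤ h := by
    intro t; rw [mem_repT, hh]
  have hcTT : (repT k ×ˢ repT k).card = (2 * h) * (2 * h) := by
    rw [Finset.card_product, hcT]
  set D := (repT k ×ˢ repT k).filter (fun p : ℤ × ℤ => p.1 ≠ p.2) with hD
  have hDE : D.card + ((repT k ×ˢ repT k).filter (fun p : ℤ × ℤ => ¬ p.1 ≠ p.2)).card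
      = (2 * h) * (2 * h) := by
    rw [hD, ← hcTT]
    exact Finset.card_filter_add_card_filter_not _
  have hcE : ((repT k ×ˢ repT k).filter (fun p : ℤ × ℤ => ¬ p.1 ≠ p.2)).card = 2 * h := by
    have heq : (repT k ×ˢ repT k).filter (fun p : ℤ × ℤ => ¬ p.1 ≠ p.2)
        = (repT k).image (fun t => (t, t)) := by
      ext ⟨a, b⟩
      simp only [Finset.mem_filter, Finset.mem_product, Finset.mem_image,
        Prod.mk.injEq, ne_eq, not_not]
      constructor
      · rintro ⟨⟨ha, _⟩, rfl⟩
        exact ⟨a, ha, rfl, rfl⟩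
      · rintro ⟨t, ht, rfl, rfl⟩
        exact ⟨⟨ht, ht⟩, rfl⟩
    rw [heq, Finset.card_image_of_injective _ (fun a b hab => (Prod.mk.injEq _ _ _ _ ▸ hab).1),
      hcT]
  have hQD : pairsQ N k = D.filter
      (fun p : ℤ × ℤ => (p.1 - p.2).natAbs ≤ h ∨ N ≤ (p.1 - p.2).natAbs + h) := by
    rw [hD, Finset.filter_filter, pairsQ, hh]
  set B := D.filter
      (fun p : ℤ × ℤ => ¬ ((p.1 - p.2).natAbs ≤ h ∨ N ≤ (p.1 - p.2).natAbs + h)) with hB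
  have hQB : (pairsQ N k).card + B.card = D.card := by
    rw [hQD, hB]
    exact Finset.card_filter_add_card_filter_not _
  have memB : ∀ p : ℤ × ℤ, p ∈ B ↔
      (p.1 ≠ 0 ∧ p.1.natAbs ≤ h ∧ p.2 ≠ 0 ∧ p.2.natAbs ≤ h ∧ p.1 ≠ p.2 ∧
        h < (p.1 - p.2).natAbs ∧ (p.1 - p.2).natAbs + h < N) := by
    intro p
    simp only [hB, hD, Finset.mem_filter, Finset.mem_product, memT]
    constructor
    · rintro ⟨⟨⟨⟨h1, h2⟩, h3, h4⟩, h5⟩, h6⟩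
      exact ⟨h1, h2, h3, h4, h5, by omega⟩
    · rintro ⟨h1, h2, h3, h4, h5, h6, h7⟩
      exact ⟨⟨⟨⟨h1, h2⟩, h3, h4⟩, h5⟩, by omega⟩
  set S := (Finset.Icc (1:ℤ) (h:ℤ) ×ˢ Finset.Icc (1:ℤ) (h:ℤ)).filter
      (fun p : ℤ × ℤ => (h:ℤ) + 1 ≤ p.1 + p.2 ∧ p.1 + p.2 + (h:ℤ) < (N:ℤ)) with hS
  have memS : ∀ p : ℤ × ℤ, p ∈ S ↔
      (1 ≤ p.1 ∧ p.1 ≤ (h:ℤ) ∧ 1 ≤ p.2 ∧ p.2 ≤ (h:ℤ) ∧ (h:ℤ) + 1 ≤ p.1 + p.2 ∧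
        p.1 + p.2 + (h:ℤ) < (N:ℤ)) := by
    intro p
    simp only [hS, Finset.mem_filter, Finset.mem_product, Finset.mem_Icc]
    tauto
  have hBsplit : (B.filter (fun p : ℤ × ℤ => p.1 < 0)).card
      + (B.filter (fun p : ℤ × ℤ => ¬ p.1 < 0)).card = B.card :=
    Finset.card_filter_add_card_filter_not _
  have hcB1 : (B.filter (fun p : ℤ × ℤ => p.1 < 0)).card = S.card := by
    apply Finset.card_nbij' (fun p : ℤ × ℤ => (-p.1, p.2)) (fun p : ℤ × ℤ => (-p.1, p.2))
    · intro p hp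
      rw [Finset.mem_coe] at hp ⊢
      rw [Finset.mem_filter] at hp
      obtain ⟨hpB, hneg⟩ := hp
      rw [memB] at hpB
      rw [memS]
      simp only
      omega
    · intro p hp
      rw [Finset.mem_coe] at hp ⊢
      rw [memS] at hp
      rw [Finset.mem_filter, memB]
      simp only
      omega
    · intro p _; simp
    · intro p _; simp
  have hcB2 : (B.filter (fun p : ℤ × ℤ => ¬ p.1 < 0)).card = S.card := by
    apply Finset.card_nbij' (fun p : ℤ × ℤ => (p.1, -p.2)) (fun p : ℤ × ℤ => (p.1, -p.2))
    · intro p hp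
      rw [Finset.mem_coe] at hp ⊢
      rw [Finset.mem_filter] at hp
      obtain ⟨hpB, hneg⟩ := hp
      rw [memB] at hpB
      rw [memS]
      simp only
      omega
    · intro p hp
      rw [Finset.mem_coe] at hp ⊢
      rw [memS] at hp
      rw [Finset.mem_filter, memB]
      simp only
      omega
    · intro p _; simp
    · intro p _; simp
  -- compute S.card
  set S1 := (Finset.Icc (1:ℤ) (h:ℤ) ×ˢ Finset.Icc (1:ℤ) (h:ℤ)).filter
      (fun p : ℤ × ℤ => (((h + 1 : ℕ)) : ℤ) ≤ p.1 + p.2) with hS1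
  have hSsub : S = S1.filter (fun p : ℤ × ℤ => p.1 + p.2 + (h:ℤ) < (N:ℤ)) := by
    rw [hS1, hS, Finset.filter_filter]
    apply Finset.filter_congr
    intro p _
    constructor
    · rintro ⟨a, b⟩; exact ⟨by omega, b⟩
    · rintro ⟨a, b⟩; exact ⟨by omega, b⟩
  have hS2eq : S1.filter (fun p : ℤ × ℤ => ¬ p.1 + p.2 + (h:ℤ) < (N:ℤ))
      = (Finset.Icc (1:ℤ) (h:ℤ) ×ˢ Finset.Icc (1:ℤ) (h:ℤ)).filter
          (fun p : ℤ × ℤ => (((N - h : ℕ)) : ℤ) ≤ p.1 + p.2) := by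
    rw [hS1, Finset.filter_filter]
    apply Finset.filter_congr
    intro p hp
    simp only [Finset.mem_product, Finset.mem_Icc] at hp
    omega
  have hSsplit : S.card + (S1.filter (fun p : ℤ × ℤ => ¬ p.1 + p.2 + (h:ℤ) < (N:ℤ))).card
      = S1.card := by
    rw [hSsub]
    exact Finset.card_filter_add_card_filter_not _
  have hcS1 : S1.card = tri h := by
    rw [hS1, card_shift h (h + 1) (by omega)]
    congr 1
    omega
  have hcS2 : (S1.filter (fun p : ℤ × ℤ => ¬ p.1 + p.2 + (h:ℤ) < (N:ℤ))).card
      = tri (3 * h + 1 - N) := by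
    rw [hS2eq, card_shift h (N - h) (by omega)]
    congr 1
    omega
  have key : (2*h) * (2*h) = 2 * (h * (2 * h - 1)) + 2 * h := by
    obtain ⟨h', hh'⟩ : ∃ h', h = h' + 2 := ⟨h - 2, by omega⟩
    rw [hh']
    have e : 2 * (h' + 2) - 1 = 2 * h' + 3 := by omega
    rw [e]
    ring
  omega

end QCard

section TypeI

variable {N k m s : ℕ} [NeZero N]

lemma typeI_adj_inl_inl {x y : ZMod N} :
    (typeI N k m s).Adj (Sum.inl x) (Sum.inl y) ↔ (circulant N k).Adj x y := by
  constructor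
  · rintro (⟨i, j, hx, hy, hadj⟩ | ⟨p, q, ⟨h1, h2⟩ | ⟨h1, h2⟩⟩)
    · rw [Sum.inl.injEq] at hx hy
      subst hx; subst hy; exact hadj
    · exact absurd h2 (by simp)
    · exact absurd h2 (by simp)
  · intro h
    exact Or.inl ⟨x, y, rfl, rfl, h⟩

lemma typeI_adj_inl_inr {x : ZMod N} {pq : Fin m × Fin s} :
    (typeI N k m s).Adj (Sum.inl x) (Sum.inr pq) ↔ x = ((pq.1 : ℕ) : ZMod N) := by
  constructor
  · rintro (⟨i, j, hx, hy, hadj⟩ | ⟨p, q, ⟨h1, h2⟩ | ⟨h1, h2⟩⟩)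
    · exact absurd hy (by simp)
    · rw [Sum.inl.injEq] at h1
      rw [Sum.inr.injEq] at h2
      rw [h1, h2]
    · exact absurd h1 (by simp)
  · intro h
    exact Or.inr ⟨pq.1, pq.2, Or.inl ⟨by rw [h], rfl⟩⟩

lemma typeI_adj_inr {pq : Fin m × Fin s} {b : ZMod N ⊕ Fin m × Fin s} :
    (typeI N k m s).Adj (Sum.inr pq) b ↔ b = Sum.inl ((pq.1 : ℕ) : ZMod N) := by
  constructor
  · rintro (⟨i, j, hx, hy, hadj⟩ | ⟨p, q, ⟨h1, h2⟩ | ⟨h1, h2⟩⟩)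
    · exact absurd hx (by simp)
    · exact absurd h1 (by simp)
    · rw [Sum.inr.injEq] at h2
      rw [h1, h2]
  · rintro rfl
    exact Or.inr ⟨pq.1, pq.2, Or.inr ⟨rfl, rfl⟩⟩

lemma nbrEdges_inr (pq : Fin m × Fin s) : nbrEdges (typeI N k m s) (Sum.inr pq) = 0 := by
  unfold nbrEdges
  have hempty : (Finset.univ.filter fun p : (ZMod N ⊕ Fin m × Fin s) × (ZMod N ⊕ Fin m × Fin s) =>
      (typeI N k m s).Adj (Sum.inr pq) p.1 ∧ (typeI N k m s).Adj (Sum.inr pq) p.2 ∧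
        (typeI N k m s).Adj p.1 p.2) = ∅ := by
    rw [Finset.eq_empty_iff_forall_notMem]
    rintro ⟨a, b⟩ hmem
    rw [Finset.mem_filter] at hmem
    obtain ⟨-, h1, h2, h3⟩ := hmem
    rw [typeI_adj_inr] at h1 h2
    subst h1; subst h2
    exact (typeI N k m s).loopless.irrefl _ h3
  rw [hempty]
  simp

lemma nbrEdges_inl (x : ZMod N) :
    nbrEdges (typeI N k m s) (Sum.inl x) = nbrEdges (circulant N k) x := by
  unfold nbrEdges
  congr 1
  have himg : (Finset.univ.filter fun p : (ZMod N ⊕ Fin m × Fin s) × (ZMod N ⊕ Fin m × Fin s) =>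
      (typeI N k m s).Adj (Sum.inl x) p.1 ∧ (typeI N k m s).Adj (Sum.inl x) p.2 ∧
        (typeI N k m s).Adj p.1 p.2)
      = (Finset.univ.filter fun p : ZMod N × ZMod N =>
          (circulant N k).Adj x p.1 ∧ (circulant N k).Adj x p.2 ∧
            (circulant N k).Adj p.1 p.2).image
          (fun p => (Sum.inl p.1, Sum.inl p.2)) := by
    ext ⟨a, b⟩
    simp only [Finset.mem_filter, Finset.mem_univ, true_and, Finset.mem_image, Prod.exists,
      Prod.mk.injEq]
    constructor
    · rintro ⟨h1, h2, h3⟩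
      obtain (⟨a', rfl⟩ | ⟨apq, rfl⟩) : (∃ a', a = Sum.inl a') ∨ (∃ apq, a = Sum.inr apq) := by
        cases a
        · exact Or.inl ⟨_, rfl⟩
        · exact Or.inr ⟨_, rfl⟩
      · obtain (⟨b', rfl⟩ | ⟨bpq, rfl⟩) : (∃ b', b = Sum.inl b') ∨ (∃ bpq, b = Sum.inr bpq) := by
          cases b
          · exact Or.inl ⟨_, rfl⟩
          · exact Or.inr ⟨_, rfl⟩
        · rw [typeI_adj_inl_inl] at h1 h2 h3
          exact ⟨a', b', ⟨h1, h2, h3⟩, rfl, rfl⟩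
        · exfalso
          rw [typeI_adj_inl_inr] at h2
          have h3' := ((typeI N k m s).adj_symm h3)
          rw [typeI_adj_inr] at h3'
          rw [h3', ← h2] at h1
          exact (typeI N k m s).loopless.irrefl _ h1
      · exfalso
        rw [typeI_adj_inl_inr] at h1
        rw [typeI_adj_inr] at h3
        rw [h3, ← h1] at h2
        exact (typeI N k m s).loopless.irrefl _ h2
    · rintro ⟨a', b', ⟨h1, h2, h3⟩, rfl, rfl⟩
      exact ⟨typeI_adj_inl_inl.2 h1, typeI_adj_inl_inl.2 h2, typeI_adj_inl_inl.2 h3⟩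
  rw [himg, Finset.card_image_of_injective]
  intro p q hpq
  simp only [Prod.mk.injEq, Sum.inl.injEq] at hpq
  exact Prod.ext hpq.1 hpq.2

lemma degree_eq_filter {V : Type*} [Fintype V] (G : SimpleGraph V) (v : V) :
    G.degree v = (Finset.univ.filter (G.Adj v)).card := by
  classical
  unfold SimpleGraph.degree
  congr 1
  ext w
  simp [SimpleGraph.mem_neighborFinset]

lemma card_filter_sum {α β : Type*} [Fintype α] [Fintype β] (P : α ⊕ β → Prop) :
    (Finset.univ.filter P).card
      = (Finset.univ.filter fun a : α => P (Sum.inl a)).card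
        + (Finset.univ.filter fun b : β => P (Sum.inr b)).card := by
  classical
  have hsplit : (Finset.univ.filter P)
      = ((Finset.univ.filter fun a : α => P (Sum.inl a)).image Sum.inl)
        ∪ ((Finset.univ.filter fun b : β => P (Sum.inr b)).image Sum.inr) := by
    ext (a | b) <;> simp
  rw [hsplit, Finset.card_union_of_disjoint, Finset.card_image_of_injective _ Sum.inl_injective,
    Finset.card_image_of_injective _ Sum.inr_injective]
  simp [Finset.disjoint_left]

lemma card_pendants (hm : m ≤ N) (x : ZMod N) :
    (Finset.univ.filter fun pq : Fin m × Fin s => x = ((pq.1 : ℕ) : ZMod N)).card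
      = if x.val < m then s else 0 := by
  classical
  have hprod : (Finset.univ.filter fun pq : Fin m × Fin s => x = ((pq.1 : ℕ) : ZMod N))
      = (Finset.univ.filter fun p : Fin m => x = ((p : ℕ) : ZMod N)) ×ˢ Finset.univ := by
    rw [← Finset.univ_product_univ]
    ext ⟨p, q⟩
    simp [Finset.mem_filter, Finset.mem_product]
  rw [hprod, Finset.card_product, Finset.card_univ, Fintype.card_fin]
  by_cases hx : x.val < m
  · rw [if_pos hx]
    have : (Finset.univ.filter fun p : Fin m => x = ((p : ℕ) : ZMod N)) = {⟨x.val, hx⟩} := by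
      ext p
      simp only [Finset.mem_filter, Finset.mem_univ, true_and, Finset.mem_singleton]
      constructor
      · intro hp
        apply Fin.ext
        show (p : ℕ) = x.val
        rw [hp, ZMod.val_cast_of_lt (lt_of_lt_of_le p.2 hm)]
      · rintro rfl
        show x = ((x.val : ℕ) : ZMod N)
        exact (ZMod.natCast_rightInverse x).symm
    rw [this, Finset.card_singleton, one_mul]
  · rw [if_neg hx]
    have : (Finset.univ.filter fun p : Fin m => x = ((p : ℕ) : ZMod N)) = ∅ := by
      rw [Finset.eq_empty_iff_forall_notMem]
      intro p hp
      simp only [Finset.mem_filter, Finset.mem_univ, true_and] at hp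
      apply hx
      rw [hp, ZMod.val_cast_of_lt (lt_of_lt_of_le p.2 hm)]
      exact p.2
    rw [this, Finset.card_empty, zero_mul]

lemma typeI_degree_inl (hN : 2 * (k / 2) < N) (hm : m ≤ N) (x : ZMod N) :
    (typeI N k m s).degree (Sum.inl x) = 2 * (k / 2) + (if x.val < m then s else 0) := by
  classical
  rw [degree_eq_filter, card_filter_sum]
  congr 1
  · have : (Finset.univ.filter fun a : ZMod N => (typeI N k m s).Adj (Sum.inl x) (Sum.inl a))
        = Finset.univ.filter fun a : ZMod N => (circulant N k).Adj x a := by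
      apply Finset.filter_congr
      intro a _
      exact typeI_adj_inl_inl
    rw [this, ← degree_eq_filter]
    exact circ_degree hN x
  · have : (Finset.univ.filter fun pq : Fin m × Fin s => (typeI N k m s).Adj (Sum.inl x) (Sum.inr pq))
        = Finset.univ.filter fun pq : Fin m × Fin s => x = ((pq.1 : ℕ) : ZMod N) := by
      apply Finset.filter_congr
      intro pq _
      exact typeI_adj_inl_inr
    rw [this]
    exact card_pendants hm x

lemma card_val_lt (hm : m ≤ N) :
    (Finset.univ.filter fun x : ZMod N => x.val < m).card = m := by
  classical
  have himg : (Finset.univ.filter fun x : ZMod N => x.val < m)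
      = (Finset.range m).image (fun j : ℕ => ((j : ℕ) : ZMod N)) := by
    ext x
    simp only [Finset.mem_filter, Finset.mem_univ, true_and, Finset.mem_image, Finset.mem_range]
    constructor
    · intro hx
      exact ⟨x.val, hx, ZMod.natCast_rightInverse x⟩
    · rintro ⟨j, hj, rfl⟩
      rw [ZMod.val_cast_of_lt (by omega)]
      exact hj
  rw [himg, Finset.card_image_of_injOn, Finset.card_range]
  intro a ha b hb hab
  rw [Finset.coe_range, Set.mem_Iio] at ha hb
  have hab' : ((a : ℕ) : ZMod N) = ((b : ℕ) : ZMod N) := hab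
  have ha' : (((a : ℕ) : ZMod N)).val = a := ZMod.val_cast_of_lt (by omega)
  have hb' : (((b : ℕ) : ZMod N)).val = b := ZMod.val_cast_of_lt (by omega)
  rw [← ha', ← hb', hab']

end TypeI


set_option maxHeartbeats 2000000 in
theorem stmt8 (N k m s : ℕ) [NeZero N] (hke : Even k) (hk4 : 4 ≤ k) (hN : k < N)
    (hm : m ≤ N) (hs : 1 ≤ s)
    (r : ℕ) (hr : r = min (N - k - 1) (k / 2))
    (A : ℚ) (hA : A = (k.choose 2 : ℚ) - k * r / 2 + r * (r - 1) / 2) :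
    clusteringCoeff (typeI N k m s) =
      2 * A / ((N : ℚ) + m * s) *
        (((N : ℚ) - m) / (k * ((k : ℚ) - 1)) +
          (m : ℚ) / (((k : ℚ) + s) * ((k : ℚ) + s - 1))) := by
  classical
  have hk2 : 2 * (k / 2) = k := by obtain ⟨c, rfl⟩ := hke; omega
  have hNk : 2 * (k / 2) < N := by omega
  -- Step 1: the number of edges among neighbours in the circulant, as a rational
  have hAnat : ∀ v : ZMod N, (nbrEdges (circulant N k) v : ℚ) = A := by
    intro v
    have hcard := pairsQ_card (N := N) (k := k) hk4 hNk
    have hnE : nbrEdges (circulant N k) v = (pairsQ N k).card / 2 := circ_nbrEdges hNk v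
    have h2 : 2 * nbrEdges (circulant N k) v = (pairsQ N k).card := by omega
    obtain ⟨H, hH⟩ : ∃ H, k / 2 = H := ⟨_, rfl⟩
    obtain ⟨Qn, hQn⟩ : ∃ q, 3 * H + 1 - N = q := ⟨_, rfl⟩
    obtain ⟨X, hXdef⟩ : ∃ X, H * (2 * H - 1) = X := ⟨_, rfl⟩
    rw [hH, hQn, hXdef] at hcard
    have fq : Qn + r = H := by omega
    have fX : X + H = 2 * (H * H) := by
      obtain ⟨h1, hh1⟩ : ∃ h1, H = h1 + 1 := ⟨H - 1, by omega⟩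
      rw [← hXdef, hh1]
      have e : 2 * (h1 + 1) - 1 = 2 * h1 + 1 := by omega
      rw [e]; ring
    have Ccard : ((pairsQ N k).card : ℚ) + 2 * ((tri H : ℕ) : ℚ)
        = 2 * (X : ℚ) + 2 * ((tri Qn : ℕ) : ℚ) := by exact_mod_cast hcard
    have C6 : ((pairsQ N k).card : ℚ) = 2 * (nbrEdges (circulant N k) v : ℚ) := by
      exact_mod_cast h2.symm
    have Cfq : (Qn : ℚ) + (r : ℚ) = (H : ℚ) := by exact_mod_cast fq
    have CfX : (X : ℚ) + (H : ℚ) = 2 * ((H : ℚ) * (H : ℚ)) := by exact_mod_cast fX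
    have CE : 2 * (H : ℚ) = (k : ℚ) := by
      have : 2 * H = k := by omega
      exact_mod_cast this
    have e1 : (nbrEdges (circulant N k) v : ℚ)
        = (X : ℚ) + ((tri Qn : ℕ) : ℚ) - ((tri H : ℕ) : ℚ) := by linarith
    have e2 : (X : ℚ) = 2 * (H : ℚ) * (H : ℚ) - (H : ℚ) := by nlinarith [CfX]
    have e3 : (Qn : ℚ) = (H : ℚ) - (r : ℚ) := by linarith
    have e4 : (k : ℚ) = 2 * (H : ℚ) := by linarith
    have C8 : (k.choose 2 : ℚ) = (k : ℚ) * ((k : ℚ) - 1) / 2 := Nat.cast_choose_two ℚ k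
    rw [hA, C8, e1, e2, tri_cast, tri_cast, e3, e4]
    ring
  -- Step 2: local clustering of the circulant vertices
  have hlc : ∀ x : ZMod N, localClustering (typeI N k m s) (Sum.inl x)
      = if x.val < m then A / (((k + s).choose 2 : ℕ) : ℚ) else A / ((k.choose 2 : ℕ) : ℚ) := by
    intro x
    unfold localClustering
    rw [nbrEdges_inl, hAnat, typeI_degree_inl hNk hm]
    split_ifs with hx
    · rw [hk2]
    · rw [add_zero, hk2]
  -- Step 3: local clustering of pendant vertices is zero
  have hlcr : ∀ pq : Fin m × Fin s, localClustering (typeI N k m s) (Sum.inr pq) = 0 := by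
    intro pq
    unfold localClustering
    rw [nbrEdges_inr]
    simp
  -- Step 4: the sum
  rw [clusteringCoeff, Fintype.sum_sum_type]
  rw [Finset.sum_congr rfl (fun x _ => hlc x), Finset.sum_congr rfl (fun pq _ => hlcr pq)]
  rw [Finset.sum_const_zero, add_zero, Finset.sum_ite, Finset.sum_const, Finset.sum_const]
  have hcards1 : (Finset.univ.filter fun x : ZMod N => x.val < m).card = m := card_val_lt hm
  have hcards2 : (Finset.univ.filter fun x : ZMod N => ¬ x.val < m).card = N - m := by
    have hsplit := Finset.card_filter_add_card_filter_not
      (s := (Finset.univ : Finset (ZMod N))) (p := fun x : ZMod N => x.val < m)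
    rw [hcards1, Finset.card_univ, ZMod.card] at hsplit
    omega
  rw [hcards1, hcards2]
  have hcardV : (Fintype.card (ZMod N ⊕ Fin m × Fin s) : ℚ) = (N : ℚ) + (m : ℚ) * (s : ℚ) := by
    simp only [Fintype.card_sum, Fintype.card_prod, Fintype.card_fin, ZMod.card]
    push_cast
    ring
  rw [hcardV]
  -- Step 5: final algebra
  have hch1 : (((k + s).choose 2 : ℕ) : ℚ) = ((k : ℚ) + s) * ((k : ℚ) + s - 1) / 2 := by
    rw [Nat.cast_choose_two]
    push_cast
    ring
  have hch2 : ((k.choose 2 : ℕ) : ℚ) = (k : ℚ) * ((k : ℚ) - 1) / 2 := Nat.cast_choose_two ℚ k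
  have hNm : ((N - m : ℕ) : ℚ) = (N : ℚ) - (m : ℚ) := by
    rw [Nat.cast_sub hm]
  rw [hch1, hch2, nsmul_eq_mul, nsmul_eq_mul, hNm]
  clear hlc hlcr hAnat hcards1 hcards2 hcardV hch1 hch2 hNm hk2 hNk
  have hkq : (4 : ℚ) ≤ (k : ℚ) := by exact_mod_cast hk4
  have hsq : (1 : ℚ) ≤ (s : ℚ) := by exact_mod_cast hs
  have hNq : (k : ℚ) < (N : ℚ) := by exact_mod_cast hN
  have hmq : (0 : ℚ) ≤ (m : ℚ) := Nat.cast_nonneg m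
  have h1 : (k : ℚ) ≠ 0 := by linarith
  have h2 : (k : ℚ) - 1 ≠ 0 := by intro h; linarith [h]
  have h3 : (k : ℚ) + s ≠ 0 := by intro h; linarith [h]
  have h4 : (k : ℚ) + s - 1 ≠ 0 := by intro h; linarith [h]
  have h5 : (N : ℚ) + (m : ℚ) * (s : ℚ) ≠ 0 := by
    intro h
    nlinarith [h]
  field_simp
  ring
end

section
/- Let k ≥ 4 be even, N > k, and suppose m vertices v_1,...,v_m of C_{N,k} are pairwise at circular distance at least 1 + k/2 (so no two are adjacent in C_{N,k} and no two share a common C_{N,k}-neighbor among the chosen positions at spacing exactly 1+k/2). Adding one central vertex adjacent to v_1,...,v_m yields the Type III graph E_{N,k,m}, whose clustering coefficient equals [(N-m)·A/C(k,2) + m·A/C(k+1,2)]/(N+1), where r = min(N-k-1, k/2) and A = C(k,2) - kr/2 + r(r-1)/2. -/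
open scoped Classical

/-- Add a central vertex (the `none` vertex) adjacent to the set `S` of vertices of `G`. -/
def cone {V : Type*} (G : SimpleGraph V) (S : Set V) : SimpleGraph (Option V) where
  Adj a b :=
    (∃ i j, a = some i ∧ b = some j ∧ G.Adj i j) ∨
    (∃ i ∈ S, (a = none ∧ b = some i) ∨ (b = none ∧ a = some i))
  symm := by
    constructor
    rintro a b (⟨i, j, rfl, rfl, h⟩ | ⟨i, hi, h⟩)
    · exact Or.inl ⟨j, i, rfl, rfl, h.symm⟩
    · exact Or.inr ⟨i, hi, h.symm⟩
  loopless := by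
    constructor
    rintro a (⟨i, j, rfl, h2, h⟩ | ⟨i, hi, ⟨h1, h2⟩ | ⟨h1, h2⟩⟩)
    · cases h2; exact G.irrefl h
    · subst h1; simp at h2
    · subst h1; simp at h2

section aux

lemma zmod_cast_val {N : ℕ} [NeZero N] (a : ZMod N) : ((a.val : ℕ) : ZMod N) = a :=
  ZMod.natCast_rightInverse a

lemma circDist_eq {N : ℕ} [NeZero N] (p q : ZMod N) (hle : q.val ≤ p.val) :
    circDist p q = min (p.val - q.val) (N - (p.val - q.val)) := by
  have hpq : p - q = ((p.val - q.val : ℕ) : ZMod N) := by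
    rw [Nat.cast_sub hle, zmod_cast_val, zmod_cast_val]
  have hval : (p - q).val = p.val - q.val := by
    rw [hpq, ZMod.val_cast_of_lt]
    have := ZMod.val_lt p
    omega
  by_cases hpq0 : p = q
  · subst hpq0
    simp [circDist]
  · have hne : p - q ≠ 0 := sub_ne_zero_of_ne hpq0
    have hqp : (q - p).val = N - (p.val - q.val) := by
      have h2 : q - p = -(p - q) := by ring
      rw [h2, ZMod.neg_val, if_neg hne, hval]
    rw [circDist, hval, hqp]

lemma circDist_comm {N : ℕ} (p q : ZMod N) : circDist p q = circDist q p := by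
  simp [circDist, min_comm]

lemma circDist_eq' {N : ℕ} [NeZero N] (p q : ZMod N) :
    circDist p q = min (max p.val q.val - min p.val q.val)
      (N - (max p.val q.val - min p.val q.val)) := by
  rcases le_total q.val p.val with hle | hle
  · rw [circDist_eq p q hle, max_eq_left hle, min_eq_right hle]
  · rw [circDist_comm, circDist_eq q p hle, max_eq_right hle, min_eq_left hle]

lemma circDist_shift {N : ℕ} (p q x : ZMod N) : circDist (p + x) (q + x) = circDist p q := by
  simp [circDist, add_sub_add_right_eq_sub]

lemma adj_shift {N k : ℕ} (p q x : ZMod N) :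
    (circulant N k).Adj (p + x) (q + x) ↔ (circulant N k).Adj p q := by
  simp [circulant, circDist_shift]

lemma adj_vals {N k : ℕ} [NeZero N] (p q : ZMod N) :
    (circulant N k).Adj p q ↔
      (1 ≤ max p.val q.val - min p.val q.val ∧
        max p.val q.val - min p.val q.val ≤ N - 1 ∧
        (max p.val q.val - min p.val q.val ≤ k/2 ∨
          N - k/2 ≤ max p.val q.val - min p.val q.val)) := by
  have h1 := ZMod.val_lt p
  have h2 := ZMod.val_lt q
  have h3 : 1 ≤ N := Nat.one_le_iff_ne_zero.mpr (NeZero.ne N)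
  constructor
  · rintro ⟨ha, hb⟩
    rw [circDist_eq'] at ha hb
    omega
  · rintro ⟨ha, hb, hc⟩
    refine ⟨?_, ?_⟩ <;> rw [circDist_eq'] <;> omega

lemma adj_zero {N k : ℕ} [NeZero N] (x : ZMod N) :
    (circulant N k).Adj 0 x ↔
      (1 ≤ x.val ∧ x.val ≤ N - 1 ∧ (x.val ≤ k/2 ∨ N - k/2 ≤ x.val)) := by
  have h1 := ZMod.val_lt x
  have h3 : 1 ≤ N := Nat.one_le_iff_ne_zero.mpr (NeZero.ne N)
  rw [adj_vals]
  have h0 : (0 : ZMod N).val = 0 := ZMod.val_zero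
  rw [h0]
  omega

lemma nbrEdges_shift {N k : ℕ} [NeZero N] (x : ZMod N) :
    nbrEdges (circulant N k) x = nbrEdges (circulant N k) 0 := by
  unfold nbrEdges
  congr 1
  apply Finset.card_nbij' (fun p : ZMod N × ZMod N => (p.1 - x, p.2 - x))
    (fun p : ZMod N × ZMod N => (p.1 + x, p.2 + x))
  · rintro ⟨a, b⟩ hab
    simp only [Finset.mem_coe, Finset.mem_filter, Finset.mem_univ, true_and] at hab ⊢
    have e1 : a - x + x = a := by ring
    have e2 : b - x + x = b := by ring
    refine ⟨?_, ?_, ?_⟩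
    · rw [← adj_shift (0) (a - x) x, zero_add, e1]; exact hab.1
    · rw [← adj_shift (0) (b - x) x, zero_add, e2]; exact hab.2.1
    · rw [← adj_shift (a - x) (b - x) x, e1, e2]; exact hab.2.2
  · rintro ⟨a, b⟩ hab
    simp only [Finset.mem_coe, Finset.mem_filter, Finset.mem_univ, true_and] at hab ⊢
    refine ⟨?_, ?_, ?_⟩
    · have := (adj_shift (0) a x).mpr hab.1; rwa [zero_add] at this
    · have := (adj_shift (0) b x).mpr hab.2.1; rwa [zero_add] at this
    · exact (adj_shift a b x).mpr hab.2.2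
  · rintro ⟨a, b⟩ _; simp
  · rintro ⟨a, b⟩ _; simp

lemma degree_shift {N k : ℕ} [NeZero N] (x : ZMod N) :
    (circulant N k).degree x = (circulant N k).degree 0 := by
  rw [← SimpleGraph.card_neighborFinset_eq_degree, ← SimpleGraph.card_neighborFinset_eq_degree]
  apply Finset.card_nbij' (fun p : ZMod N => p - x) (fun p : ZMod N => p + x)
  · intro a ha
    simp only [Finset.mem_coe, SimpleGraph.mem_neighborFinset] at ha ⊢
    have e1 : a - x + x = a := by ring
    rw [← adj_shift (0) (a - x) x, zero_add, e1]; exact ha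
  · intro a ha
    simp only [Finset.mem_coe, SimpleGraph.mem_neighborFinset] at ha ⊢
    have := (adj_shift (0) a x).mpr ha; rwa [zero_add] at this
  · intro a _; simp
  · intro a _; simp

lemma degree_zero {N k : ℕ} [NeZero N] (hk : 2 * (k/2) < N) :
    (circulant N k).degree 0 = 2 * (k / 2) := by
  have h3 : 1 ≤ N := Nat.one_le_iff_ne_zero.mpr (NeZero.ne N)
  rw [← SimpleGraph.card_neighborFinset_eq_degree]
  have key : ((circulant N k).neighborFinset 0).card =
      (Finset.Icc 1 (k/2) ∪ Finset.Icc (N - k/2) (N-1)).card := by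
    apply Finset.card_nbij (fun p : ZMod N => p.val)
    · intro a ha
      simp only [Finset.mem_coe, SimpleGraph.mem_neighborFinset] at ha
      rw [adj_zero] at ha
      simp only [Finset.mem_coe, Finset.mem_union, Finset.mem_Icc]
      omega
    · intro a _ b _ hab
      exact ZMod.val_injective N hab
    · intro a ha
      simp only [Finset.coe_union, Finset.coe_Icc, Set.mem_union, Set.mem_Icc] at ha
      refine ⟨(a : ZMod N), ?_, ?_⟩
      · simp only [Finset.coe_filter, Set.mem_setOf_eq, Finset.mem_coe,
          SimpleGraph.mem_neighborFinset]
        rw [adj_zero, ZMod.val_cast_of_lt (by omega)]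
        omega
      · show ((a : ZMod N)).val = a
        rw [ZMod.val_cast_of_lt (by omega)]
  rw [key, Finset.card_union_of_disjoint, Nat.card_Icc, Nat.card_Icc]
  · omega
  · rw [Finset.disjoint_left]
    intro a ha hb
    simp only [Finset.mem_Icc] at ha hb
    omega

section counting
-- nat counting lemmas from t2
lemma choose2_succ (x : ℕ) : (x+1).choose 2 = x.choose 2 + x := by
  rw [Nat.choose_succ_succ]
  simp [Nat.choose_one_right]
  omega

lemma sum_Icc_sub (h M : ℕ) : ∑ a ∈ Finset.Icc 1 h, (M - a) = M.choose 2 - (M-h).choose 2 := by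
  induction h with
  | zero => simp
  | succ n ih =>
    rw [Finset.sum_Icc_succ_top (by omega), ih]
    have h1 : (M - n).choose 2 ≤ M.choose 2 := Nat.choose_le_choose 2 (by omega)
    have h2 : (M - (n+1)).choose 2 ≤ M.choose 2 := Nat.choose_le_choose 2 (by omega)
    rcases le_or_gt M (n+1) with hc | hc
    · have e0 : M - n ≤ 1 := by omega
      have e1 : (M-n).choose 2 = 0 := by
        interval_cases h : (M - n) <;> simp
      have e2 : (M-(n+1)).choose 2 = 0 := by
        have : M - (n+1) = 0 := by omega
        simp [this]
      omega
    · have e : M - n = (M - (n+1)) + 1 := by omega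
      rw [e, choose2_succ] at h1 ⊢
      omega

lemma count_sum_le (h M : ℕ) (hM : M ≤ h + 1) :
    ((Finset.Icc 1 h ×ˢ Finset.Icc 1 h).filter (fun p : ℕ×ℕ => p.1 + p.2 ≤ M)).card
      = M.choose 2 := by
  rw [Finset.card_filter, Finset.sum_product]
  have key : ∀ a ∈ Finset.Icc 1 h,
      (∑ b ∈ Finset.Icc 1 h, if a + b ≤ M then 1 else 0) = M - a := by
    intro a ha
    rw [Finset.mem_Icc] at ha
    rw [← Finset.card_filter]
    have : (Finset.Icc 1 h).filter (fun b => a + b ≤ M) = Finset.Icc 1 (M - a) := by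
      ext b; simp only [Finset.mem_filter, Finset.mem_Icc]; omega
    rw [this, Nat.card_Icc]; omega
  rw [Finset.sum_congr rfl key, sum_Icc_sub]
  have : (M - h).choose 2 = 0 := by
    have : M - h ≤ 1 := by omega
    interval_cases h2 : (M - h) <;> simp
  omega

lemma count_sum_ge (h c : ℕ) (hc : h + 1 ≤ c) :
    ((Finset.Icc 1 h ×ˢ Finset.Icc 1 h).filter (fun p : ℕ×ℕ => c ≤ p.1 + p.2)).card
      = (2*h + 2 - c).choose 2 := by
  rw [← count_sum_le h (2*h+2-c) (by omega)]
  apply Finset.card_nbij' (fun p => (h+1-p.1, h+1-p.2)) (fun p => (h+1-p.1, h+1-p.2))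
  · rintro ⟨a,b⟩ hab
    simp only [Finset.mem_coe, Finset.mem_filter, Finset.mem_product, Finset.mem_Icc] at hab ⊢
    omega
  · rintro ⟨a,b⟩ hab
    simp only [Finset.mem_coe, Finset.mem_filter, Finset.mem_product, Finset.mem_Icc] at hab ⊢
    omega
  · rintro ⟨a,b⟩ hab
    simp only [Finset.mem_coe, Finset.mem_filter, Finset.mem_product, Finset.mem_Icc] at hab
    simp only [Prod.mk.injEq]
    omega
  · rintro ⟨a,b⟩ hab
    simp only [Finset.mem_coe, Finset.mem_filter, Finset.mem_product, Finset.mem_Icc] at hab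
    simp only [Prod.mk.injEq]
    omega

lemma card_ne_pairs (s : Finset ℕ) :
    ((s ×ˢ s).filter (fun q : ℕ×ℕ => q.1 ≠ q.2)).card = s.card * s.card - s.card := by
  have h1 := Finset.card_filter_add_card_filter_not
    (s := s ×ˢ s) (p := fun q : ℕ×ℕ => q.1 = q.2)
  have h2 : (s ×ˢ s).filter (fun q : ℕ×ℕ => q.1 = q.2) = s.diag := by
    ext ⟨a, b⟩
    simp only [Finset.mem_filter, Finset.mem_product, Finset.mem_diag]
    constructor
    · rintro ⟨⟨ha, -⟩, rfl⟩; exact ⟨ha, rfl⟩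
    · rintro ⟨ha, rfl⟩; exact ⟨⟨ha, ha⟩, rfl⟩
  have h3 : ((s ×ˢ s).filter (fun q : ℕ×ℕ => ¬ q.1 = q.2)) =
      ((s ×ˢ s).filter (fun q : ℕ×ℕ => q.1 ≠ q.2)) := rfl
  rw [h2, h3, Finset.diag_card, Finset.card_product] at h1
  omega

end counting

lemma count_U (N h : ℕ) (hN : 2*h + 1 ≤ N) :
    ((Finset.Icc 1 h ×ˢ Finset.Icc 1 h).filter
      (fun q : ℕ×ℕ => q.1 + q.2 ≤ h ∨ N - h ≤ q.1 + q.2)).card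
      = h.choose 2 + (2*h + 2 - (N - h)).choose 2 := by
  have hdisj : Disjoint
      ((Finset.Icc 1 h ×ˢ Finset.Icc 1 h).filter (fun q : ℕ×ℕ => q.1 + q.2 ≤ h))
      ((Finset.Icc 1 h ×ˢ Finset.Icc 1 h).filter (fun q : ℕ×ℕ => N - h ≤ q.1 + q.2)) := by
    rw [Finset.disjoint_left]
    rintro ⟨a,b⟩ ha hb
    simp only [Finset.mem_filter, Finset.mem_product, Finset.mem_Icc] at ha hb
    omega
  rw [Finset.filter_or, Finset.card_union_of_disjoint hdisj,
    count_sum_le h h (by omega), count_sum_ge h (N - h) (by omega)]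

lemma card_pairs_zero (N k : ℕ) [NeZero N] (hke : Even k) (hk4 : 4 ≤ k) (hN : k < N) :
    (Finset.univ.filter fun p : ZMod N × ZMod N =>
        (circulant N k).Adj 0 p.1 ∧ (circulant N k).Adj 0 p.2 ∧
          (circulant N k).Adj p.1 p.2).card
      = 2*((k/2)*(k/2) - k/2) + 2*((k/2).choose 2 + (2*(k/2)+2-(N-k/2)).choose 2) := by
  set h := k / 2 with hh
  have hk2 : k = 2 * h := by
    obtain ⟨t, ht⟩ := hke; omega
  have hh2 : 2 ≤ h := by omega
  have hNh : 2*h + 1 ≤ N := by omega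
  -- the nat model
  set D : ℕ×ℕ → ℕ := fun q => max q.1 q.2 - min q.1 q.2 with hD
  set T : Finset (ℕ×ℕ) := (Finset.Icc 1 (N-1) ×ˢ Finset.Icc 1 (N-1)).filter
    (fun q : ℕ×ℕ =>
      (q.1 ≤ h ∨ N - h ≤ q.1) ∧ (q.2 ≤ h ∨ N - h ≤ q.2) ∧
      1 ≤ D q ∧ D q ≤ N-1 ∧ (D q ≤ h ∨ N - h ≤ D q)) with hT
  have step1 : (Finset.univ.filter fun p : ZMod N × ZMod N =>
      (circulant N k).Adj 0 p.1 ∧ (circulant N k).Adj 0 p.2 ∧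
        (circulant N k).Adj p.1 p.2).card = T.card := by
    apply Finset.card_nbij (fun p : ZMod N × ZMod N => (p.1.val, p.2.val))
    · rintro ⟨a,b⟩ hab
      simp only [Finset.mem_coe, Finset.mem_filter, Finset.mem_univ, true_and] at hab
      obtain ⟨h1, h2, h3⟩ := hab
      rw [adj_zero] at h1 h2
      rw [adj_vals] at h3
      simp only [Finset.mem_coe, hT, Finset.mem_filter, Finset.mem_product, Finset.mem_Icc, hD]
      refine ⟨⟨⟨h1.1, h1.2.1⟩, ⟨h2.1, h2.2.1⟩⟩, ?_, ?_, h3.1, h3.2.1, h3.2.2⟩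
      · omega
      · omega
    · rintro ⟨a,b⟩ _ ⟨c,d⟩ _ hab
      simp only [Prod.mk.injEq] at hab
      exact Prod.ext (ZMod.val_injective N hab.1) (ZMod.val_injective N hab.2)
    · rintro ⟨a,b⟩ hab
      simp only [hT, Finset.coe_filter, Set.mem_setOf_eq, Finset.mem_product,
        Finset.mem_Icc, hD] at hab
      obtain ⟨⟨⟨ha1, ha2⟩, hb1, hb2⟩, hc⟩ := hab
      refine ⟨((a : ZMod N), (b : ZMod N)), ?_, ?_⟩
      · have hva : ((a : ZMod N)).val = a := ZMod.val_cast_of_lt (by omega)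
        have hvb : ((b : ZMod N)).val = b := ZMod.val_cast_of_lt (by omega)
        simp only [Finset.coe_filter, Set.mem_setOf_eq, Finset.mem_univ, true_and]
        rw [adj_zero, adj_zero, adj_vals, hva, hvb]
        refine ⟨⟨ha1, ha2, hc.1⟩, ⟨hb1, hb2, hc.2.1⟩, hc.2.2⟩
      · have hva : ((a : ZMod N)).val = a := ZMod.val_cast_of_lt (by omega)
        have hvb : ((b : ZMod N)).val = b := ZMod.val_cast_of_lt (by omega)
        simp only [hva, hvb]
  rw [step1]
  -- split T into four pieces
  have e1 := Finset.card_filter_add_card_filter_not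
    (s := T) (p := fun q : ℕ×ℕ => q.1 ≤ h)
  have e2 := Finset.card_filter_add_card_filter_not
    (s := T.filter (fun q : ℕ×ℕ => q.1 ≤ h)) (p := fun q : ℕ×ℕ => q.2 ≤ h)
  have e3 := Finset.card_filter_add_card_filter_not
    (s := T.filter (fun q : ℕ×ℕ => ¬ q.1 ≤ h)) (p := fun q : ℕ×ℕ => q.2 ≤ h)
  -- T1 : both small
  have eT1 : (T.filter (fun q : ℕ×ℕ => q.1 ≤ h)).filter (fun q : ℕ×ℕ => q.2 ≤ h)
      = (Finset.Icc 1 h ×ˢ Finset.Icc 1 h).filter (fun q : ℕ×ℕ => q.1 ≠ q.2) := by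
    simp only [hT, Finset.filter_filter]
    ext ⟨a,b⟩
    simp only [Finset.mem_filter, Finset.mem_product, Finset.mem_Icc, hD]
    omega
  -- T2 : both large
  have eT2 : (T.filter (fun q : ℕ×ℕ => ¬ q.1 ≤ h)).filter (fun q : ℕ×ℕ => ¬ q.2 ≤ h)
      = (Finset.Icc (N-h) (N-1) ×ˢ Finset.Icc (N-h) (N-1)).filter
          (fun q : ℕ×ℕ => q.1 ≠ q.2) := by
    simp only [hT, Finset.filter_filter]
    ext ⟨a,b⟩
    simp only [Finset.mem_filter, Finset.mem_product, Finset.mem_Icc, hD]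
    omega
  -- T3 : first small, second large
  have eT3 : (T.filter (fun q : ℕ×ℕ => q.1 ≤ h)).filter (fun q : ℕ×ℕ => ¬ q.2 ≤ h)
      = (Finset.Icc 1 h ×ˢ Finset.Icc (N-h) (N-1)).filter
          (fun q : ℕ×ℕ => q.2 - q.1 ≤ h ∨ N - h ≤ q.2 - q.1) := by
    simp only [hT, Finset.filter_filter]
    ext ⟨a,b⟩
    simp only [Finset.mem_filter, Finset.mem_product, Finset.mem_Icc, hD]
    omega
  -- T4 : first large, second small
  have eT4 : (T.filter (fun q : ℕ×ℕ => ¬ q.1 ≤ h)).filter (fun q : ℕ×ℕ => q.2 ≤ h)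
      = (Finset.Icc (N-h) (N-1) ×ˢ Finset.Icc 1 h).filter
          (fun q : ℕ×ℕ => q.1 - q.2 ≤ h ∨ N - h ≤ q.1 - q.2) := by
    simp only [hT, Finset.filter_filter]
    ext ⟨a,b⟩
    simp only [Finset.mem_filter, Finset.mem_product, Finset.mem_Icc, hD]
    omega
  -- cardinalities of the pieces
  have c1 : ((Finset.Icc 1 h ×ˢ Finset.Icc 1 h).filter
      (fun q : ℕ×ℕ => q.1 ≠ q.2)).card = h * h - h := by
    rw [card_ne_pairs, Nat.card_Icc]
    simp
  have c2 : ((Finset.Icc (N-h) (N-1) ×ˢ Finset.Icc (N-h) (N-1)).filter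
      (fun q : ℕ×ℕ => q.1 ≠ q.2)).card = h * h - h := by
    rw [card_ne_pairs, Nat.card_Icc]
    have : N - 1 + 1 - (N - h) = h := by omega
    rw [this]
  have c3 : ((Finset.Icc 1 h ×ˢ Finset.Icc (N-h) (N-1)).filter
      (fun q : ℕ×ℕ => q.2 - q.1 ≤ h ∨ N - h ≤ q.2 - q.1)).card
      = h.choose 2 + (2*h + 2 - (N - h)).choose 2 := by
    rw [← count_U N h hNh]
    apply Finset.card_nbij' (fun q : ℕ×ℕ => (q.1, N - q.2)) (fun q : ℕ×ℕ => (q.1, N - q.2))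
    · rintro ⟨a,b⟩ hab
      simp only [Finset.mem_coe, Finset.mem_filter, Finset.mem_product, Finset.mem_Icc] at hab ⊢
      omega
    · rintro ⟨a,b⟩ hab
      simp only [Finset.mem_coe, Finset.mem_filter, Finset.mem_product, Finset.mem_Icc] at hab ⊢
      omega
    · rintro ⟨a,b⟩ hab
      simp only [Finset.mem_coe, Finset.mem_filter, Finset.mem_product, Finset.mem_Icc] at hab
      have e : N - (N - b) = b := by omega
      simp [e]
    · rintro ⟨a,b⟩ hab
      simp only [Finset.mem_coe, Finset.mem_filter, Finset.mem_product, Finset.mem_Icc] at hab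
      have e : N - (N - b) = b := by omega
      simp [e]
  have c4 : ((Finset.Icc (N-h) (N-1) ×ˢ Finset.Icc 1 h).filter
      (fun q : ℕ×ℕ => q.1 - q.2 ≤ h ∨ N - h ≤ q.1 - q.2)).card
      = h.choose 2 + (2*h + 2 - (N - h)).choose 2 := by
    rw [← count_U N h hNh]
    apply Finset.card_nbij' (fun q : ℕ×ℕ => (q.2, N - q.1)) (fun q : ℕ×ℕ => (N - q.2, q.1))
    · rintro ⟨a,b⟩ hab
      simp only [Finset.mem_coe, Finset.mem_filter, Finset.mem_product, Finset.mem_Icc] at hab ⊢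
      omega
    · rintro ⟨a,b⟩ hab
      simp only [Finset.mem_coe, Finset.mem_filter, Finset.mem_product, Finset.mem_Icc] at hab ⊢
      omega
    · rintro ⟨a,b⟩ hab
      simp only [Finset.mem_coe, Finset.mem_filter, Finset.mem_product, Finset.mem_Icc] at hab
      have e : N - (N - a) = a := by omega
      simp [e]
    · rintro ⟨a,b⟩ hab
      simp only [Finset.mem_coe, Finset.mem_filter, Finset.mem_product, Finset.mem_Icc] at hab
      have e : N - (N - b) = b := by omega
      simp [e]
  rw [eT1, eT3] at e2
  rw [eT2, eT4] at e3
  rw [c1, c3] at e2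
  rw [c2, c4] at e3
  omega

lemma nbrEdges_circulant (N k : ℕ) [NeZero N] (hke : Even k) (hk4 : 4 ≤ k) (hN : k < N)
    (x : ZMod N) :
    nbrEdges (circulant N k) x
      = ((k/2)*(k/2) - k/2) + ((k/2).choose 2 + (2*(k/2)+2-(N-k/2)).choose 2) := by
  rw [nbrEdges_shift]
  unfold nbrEdges
  rw [card_pairs_zero N k hke hk4 hN]
  omega

lemma nbrEdges_circulant_rat (N k r : ℕ) [NeZero N] (hke : Even k) (hk4 : 4 ≤ k)
    (hN : k < N) (hr : r = min (N - k - 1) (k / 2)) (x : ZMod N) :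
    (nbrEdges (circulant N k) x : ℚ) = (k.choose 2 : ℚ) - k * r / 2 + r * (r - 1) / 2 := by
  rw [nbrEdges_circulant N k hke hk4 hN]
  set h := k / 2 with hh
  have hk2 : k = 2 * h := by obtain ⟨t, ht⟩ := hke; omega
  have hrh : r ≤ h := by omega
  have hX : (2*h+2-(N-h)).choose 2 = (h+1-r).choose 2 := by
    rcases le_or_gt (N - k - 1) h with hc | hc
    · congr 1
      omega
    · have e1 : 2*h+2-(N-h) = 0 := by omega
      have e2 : h+1-r = 1 := by omega
      rw [e1, e2]; rfl
  rw [hX]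
  have cast1 : ((h*h - h : ℕ) : ℚ) = (h:ℚ)*(h:ℚ) - (h:ℚ) := by
    have : h ≤ h * h := Nat.le_mul_of_pos_left h (by omega)
    push_cast [Nat.cast_sub this]
    ring
  have cast2 : (((h+1-r).choose 2 : ℕ) : ℚ)
      = ((h:ℚ) + 1 - r) * ((h:ℚ) - r) / 2 := by
    rw [Nat.cast_choose_two]
    have : ((h+1-r : ℕ) : ℚ) = (h:ℚ) + 1 - r := by
      push_cast [Nat.cast_sub (by omega : r ≤ h + 1)]
      ring
    rw [this]
    ring
  push_cast [cast1, cast2, Nat.cast_choose_two]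
  rw [hk2]
  push_cast
  ring

section coneLemmas
variable {V : Type*} (G : SimpleGraph V) (S : Set V)

lemma cone_adj_some_some (a b : V) : (cone G S).Adj (some a) (some b) ↔ G.Adj a b := by
  constructor
  · rintro (⟨i, j, hi, hj, h⟩ | ⟨i, hi, ⟨h1, h2⟩ | ⟨h1, h2⟩⟩)
    · cases hi; cases hj; exact h
    · simp at h1
    · simp at h1
  · intro h; exact Or.inl ⟨a, b, rfl, rfl, h⟩

lemma cone_adj_some_none (a : V) : (cone G S).Adj (some a) none ↔ a ∈ S := by
  constructor
  · rintro (⟨i, j, hi, hj, h⟩ | ⟨i, hi, ⟨h1, h2⟩ | ⟨h1, h2⟩⟩)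
    · simp at hj
    · simp at h1
    · cases h2; exact hi
  · intro h; exact Or.inr ⟨a, h, Or.inr ⟨rfl, rfl⟩⟩

lemma cone_adj_none_some (a : V) : (cone G S).Adj none (some a) ↔ a ∈ S := by
  constructor
  · rintro (⟨i, j, hi, hj, h⟩ | ⟨i, hi, ⟨h1, h2⟩ | ⟨h1, h2⟩⟩)
    · simp at hi
    · cases h2; exact hi
    · simp at h1
  · intro h; exact Or.inr ⟨a, h, Or.inl ⟨rfl, rfl⟩⟩

lemma cone_adj_none_none : ¬ (cone G S).Adj none none := (cone G S).loopless.irrefl none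

variable [Fintype V]

lemma cone_degree_some (u : V) :
    (cone G S).degree (some u) = G.degree u + (if u ∈ S then 1 else 0) := by
  classical
  rw [← SimpleGraph.card_neighborFinset_eq_degree, ← SimpleGraph.card_neighborFinset_eq_degree]
  have key : (cone G S).neighborFinset (some u)
      = ((G.neighborFinset u).image some) ∪ (if u ∈ S then {none} else ∅) := by
    ext a
    cases a with
    | none =>
      simp only [SimpleGraph.mem_neighborFinset, Finset.mem_union, Finset.mem_image,
        cone_adj_some_none]
      constructor
      · intro h; right; rw [if_pos h]; simp
      · rintro (⟨w, _, hw⟩ | h)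
        · simp at hw
        · by_cases hu : u ∈ S
          · exact hu
          · rw [if_neg hu] at h; simp at h
    | some w =>
      simp only [SimpleGraph.mem_neighborFinset, Finset.mem_union, Finset.mem_image,
        cone_adj_some_some]
      constructor
      · intro h; left; exact ⟨w, h, rfl⟩
      · rintro (⟨x, hx, hxx⟩ | h)
        · cases hxx; exact hx
        · by_cases hu : u ∈ S
          · rw [if_pos hu] at h; simp at h
          · rw [if_neg hu] at h; simp at h
  rw [key, Finset.card_union_of_disjoint, Finset.card_image_of_injective _ (Option.some_injective V)]
  · congr 1
    by_cases hu : u ∈ S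
    · rw [if_pos hu, if_pos hu]; simp
    · rw [if_neg hu, if_neg hu]; simp
  · rw [Finset.disjoint_left]
    rintro a ha hb
    obtain ⟨w, _, hw⟩ := Finset.mem_image.mp ha
    by_cases hu : u ∈ S
    · rw [if_pos hu] at hb; simp only [Finset.mem_singleton] at hb
      rw [hb] at hw; simp at hw
    · rw [if_neg hu] at hb; simp at hb

variable (hS : ∀ a ∈ S, ∀ b ∈ S, ¬ G.Adj a b)
include hS

lemma nbrEdges_cone_none : nbrEdges (cone G S) none = 0 := by
  classical
  unfold nbrEdges
  have : (Finset.univ.filter fun p : Option V × Option V =>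
      (cone G S).Adj none p.1 ∧ (cone G S).Adj none p.2 ∧ (cone G S).Adj p.1 p.2)
      = ∅ := by
    rw [Finset.filter_eq_empty_iff]
    rintro ⟨x, y⟩ _
    rintro ⟨h1, h2, h3⟩
    cases x with
    | none => exact cone_adj_none_none G S h1
    | some a =>
      cases y with
      | none => exact cone_adj_none_none G S h2
      | some b =>
        rw [cone_adj_none_some] at h1 h2
        rw [cone_adj_some_some] at h3
        exact hS a h1 b h2 h3
  rw [this]
  simp

lemma nbrEdges_cone_some (u : V) : nbrEdges (cone G S) (some u) = nbrEdges G u := by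
  classical
  unfold nbrEdges
  congr 1
  symm
  apply Finset.card_nbij (fun p : V × V => (some p.1, some p.2))
  · rintro ⟨a, b⟩ hab
    simp only [Finset.mem_coe, Finset.mem_filter, Finset.mem_univ, true_and] at hab ⊢
    rw [cone_adj_some_some, cone_adj_some_some, cone_adj_some_some]
    exact hab
  · rintro ⟨a, b⟩ _ ⟨c, d⟩ _ hab
    simp only [Prod.mk.injEq, Option.some.injEq] at hab
    exact Prod.ext hab.1 hab.2
  · rintro ⟨x, y⟩ hxy
    simp only [Finset.coe_filter, Set.mem_setOf_eq, Finset.mem_univ, true_and] at hxy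
    obtain ⟨h1, h2, h3⟩ := hxy
    cases x with
    | none =>
      cases y with
      | none => exact absurd h3 (cone_adj_none_none G S)
      | some b =>
        rw [cone_adj_some_none] at h1
        rw [cone_adj_none_some] at h3
        rw [cone_adj_some_some] at h2
        exact absurd h2 (hS u h1 b h3)
    | some a =>
      cases y with
      | none =>
        rw [cone_adj_some_none] at h2
        rw [cone_adj_some_none] at h3
        rw [cone_adj_some_some] at h1
        exact absurd h1 (hS u h2 a h3)
      | some b =>
        rw [cone_adj_some_some] at h1 h2 h3
        exact ⟨(a, b), by simp only [Finset.coe_filter, Set.mem_setOf_eq,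
          Finset.mem_univ, true_and]; exact ⟨h1, h2, h3⟩, rfl⟩

end coneLemmas

theorem stmt14 (N k m : ℕ) [NeZero N] (hke : Even k) (hk4 : 4 ≤ k) (hN : k < N)
    (v : Fin m → ZMod N)
    (hv : ∀ i j : Fin m, i ≠ j → 1 + k / 2 ≤ circDist (v i) (v j))
    (r : ℕ) (hr : r = min (N - k - 1) (k / 2))
    (A : ℚ) (hA : A = (k.choose 2 : ℚ) - k * r / 2 + r * (r - 1) / 2) :
    clusteringCoeff (cone (circulant N k) (Set.range v)) =
      (((N : ℚ) - m) * A / (k.choose 2 : ℚ) + m * A / ((k + 1).choose 2 : ℚ))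
        / ((N : ℚ) + 1) := by
  classical
  set G := circulant N k with hG
  set S := Set.range v with hSdef
  have hvinj : Function.Injective v := by
    intro i j hij
    by_contra hne
    have h1 := hv i j hne
    rw [hij] at h1
    simp [circDist] at h1
  have hS : ∀ a ∈ S, ∀ b ∈ S, ¬ G.Adj a b := by
    rintro a ⟨i, rfl⟩ b ⟨j, rfl⟩ hadj
    have h1 : 1 ≤ circDist (v i) (v j) := hadj.1
    have h2 : circDist (v i) (v j) ≤ k / 2 := hadj.2
    by_cases hij : i = j
    · subst hij; simp [circDist] at h1
    · have := hv i j hij; omega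
  have hm : m ≤ N := by
    have := Fintype.card_le_of_injective v hvinj
    simpa [ZMod.card] using this
  have hdeg : ∀ u : ZMod N, G.degree u = k := by
    intro u
    rw [hG, degree_shift, degree_zero]
    · obtain ⟨t, ht⟩ := hke; omega
    · obtain ⟨t, ht⟩ := hke; omega
  have hE : ∀ u : ZMod N, (nbrEdges G u : ℚ) = A := by
    intro u
    rw [hG, nbrEdges_circulant_rat N k r hke hk4 hN hr u, ← hA]
  have hsome : ∀ u : ZMod N, localClustering (cone G S) (some u) =
      (if u ∈ S then A / (((k+1).choose 2 : ℕ) : ℚ) else A / ((k.choose 2 : ℕ) : ℚ)) := by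
    intro u
    unfold localClustering
    rw [nbrEdges_cone_some G S hS u, cone_degree_some, hdeg u, hE u]
    by_cases hu : u ∈ S
    · rw [if_pos hu, if_pos hu]
    · rw [if_neg hu, if_neg hu, Nat.add_zero]
  have hnone : localClustering (cone G S) none = 0 := by
    unfold localClustering
    rw [nbrEdges_cone_none G S hS]
    simp
  have hcard : (Finset.univ.filter (fun u : ZMod N => u ∈ S)).card = m := by
    have himg : (Finset.univ.filter (fun u : ZMod N => u ∈ S))
        = Finset.image v Finset.univ := by
      ext u
      simp [hSdef, Set.mem_range, eq_comm]
    rw [himg, Finset.card_image_of_injective _ hvinj, Finset.card_univ, Fintype.card_fin]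
  have hcard' : (Finset.univ.filter (fun u : ZMod N => ¬ u ∈ S)).card = N - m := by
    have := Finset.card_filter_add_card_filter_not
      (s := (Finset.univ : Finset (ZMod N))) (p := fun u : ZMod N => u ∈ S)
    rw [hcard, Finset.card_univ, ZMod.card] at this
    omega
  unfold clusteringCoeff
  rw [Fintype.sum_option, hnone, zero_add]
  rw [Finset.sum_congr rfl (fun u _ => hsome u)]
  rw [← Finset.sum_filter_add_sum_filter_not Finset.univ (fun u : ZMod N => u ∈ S)]
  have sum1 : ∑ u ∈ Finset.univ.filter (fun u : ZMod N => u ∈ S),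
      (if u ∈ S then A / (((k+1).choose 2 : ℕ) : ℚ) else A / ((k.choose 2 : ℕ) : ℚ))
      = m * (A / (((k+1).choose 2 : ℕ) : ℚ)) := by
    rw [Finset.sum_congr rfl (fun u hu => by
      rw [if_pos (Finset.mem_filter.mp hu).2])]
    rw [Finset.sum_const, hcard, nsmul_eq_mul]
  have sum2 : ∑ u ∈ Finset.univ.filter (fun u : ZMod N => ¬ u ∈ S),
      (if u ∈ S then A / (((k+1).choose 2 : ℕ) : ℚ) else A / ((k.choose 2 : ℕ) : ℚ))
      = ((N : ℚ) - m) * (A / ((k.choose 2 : ℕ) : ℚ)) := by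
    rw [Finset.sum_congr rfl (fun u hu => by
      rw [if_neg (Finset.mem_filter.mp hu).2])]
    rw [Finset.sum_const, hcard', nsmul_eq_mul]
    congr 1
    push_cast [Nat.cast_sub hm]
    ring
  rw [sum1, sum2]
  rw [Fintype.card_option, ZMod.card]
  push_cast
  ring

end aux
end
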